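/- arXiv:2003.12882 — 6 statements merged into one kernel-verified Lean document; each statement's English description precedes it below -/
import Mathlib

section
/- Let G be a nontrivial finite group. Then there exist normal subsets S and T of G with |S| ≥ |G|/3 and |T| ≥ |G|/3 such that the identity element of G does not lie in the product set ST = {st : s ∈ S, t ∈ T}. -/
open Pointwise

section Aux

variable {G : Type*} [Group G] [Fintype G] [DecidableEq G]

private def classF (x : G) : Finset G := Finset.univ.image (fun g => g * x * g⁻¹)

private lemma mem_classF {x y : G} : y ∈ classF x ↔ ∃ g : G, g * x * g⁻¹ = y := by
  simp [classF]

private lemma classF_conj {x y : G} (hy : y ∈ classF x) (g : G) : g * y * g⁻¹ ∈ classF x := by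
  obtain ⟨h, rfl⟩ := mem_classF.mp hy
  exact mem_classF.mpr ⟨g * h, by group⟩

private lemma classF_conj' {x y : G} (g : G) (hy : g * y * g⁻¹ ∈ classF x) : y ∈ classF x := by
  have := classF_conj hy g⁻¹
  simpa [mul_assoc] using this

private lemma self_mem_classF (x : G) : x ∈ classF x :=
  mem_classF.mpr ⟨1, by group⟩

private lemma classF_coe (x : G) :
    ((classF x : Finset G) : Set G) = MulAction.orbit (ConjAct G) x := by
  ext y
  simp only [Finset.coe_image, Finset.coe_univ, Set.image_univ, Set.mem_range,
    MulAction.mem_orbit_iff, classF]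
  constructor
  · rintro ⟨g, rfl⟩; exact ⟨ConjAct.toConjAct g, ConjAct.toConjAct_smul g x⟩
  · rintro ⟨g, rfl⟩; exact ⟨ConjAct.ofConjAct g, (ConjAct.smul_def g x).symm⟩

private lemma classF_card_dvd (x : G) : (classF x).card ∣ Fintype.card G := by
  classical
  have h := MulAction.card_orbit_mul_card_stabilizer_eq_card_group (ConjAct G) x
  have hcard : (classF x).card = Fintype.card (MulAction.orbit (ConjAct G) x) := by
    rw [← Nat.card_eq_fintype_card, ← classF_coe]
    simp only [Finset.coe_sort_coe, Nat.card_eq_finsetCard]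
  have hG : Fintype.card (ConjAct G) = Fintype.card G :=
    Fintype.card_congr ConjAct.ofConjAct.toEquiv
  rw [hG] at h
  exact ⟨_, by rw [hcard, ← h]⟩

private lemma exists_middle (G : Type*) [Group G] [Fintype G] [Nontrivial G] [DecidableEq G] :
    ∃ A : Finset G, (∀ g a : G, a ∈ A → g * a * g⁻¹ ∈ A) ∧
      Fintype.card G ≤ 3 * A.card ∧ 3 * A.card ≤ 2 * Fintype.card G := by
  classical
  set n := Fintype.card G with hn
  have hn2 : 2 ≤ n := Fintype.one_lt_card
  by_cases hbig : ∃ x : G, n ≤ 3 * (classF x).card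
  · obtain ⟨x, hx⟩ := hbig
    refine ⟨classF x, fun g a ha => classF_conj ha g, hx, ?_⟩
    have hdvd := classF_card_dvd x
    have hlt : (classF x).card < n := by
      rcases lt_or_ge (classF x).card n with h | h
      · exact h
      · exfalso
        have hle : (classF x).card ≤ n := by
          rw [hn]; exact Finset.card_le_univ _
        have heq : (classF x).card = n := le_antisymm hle h
        have huniv : classF x = Finset.univ :=
          Finset.eq_univ_of_card _ heq
        have h1 : (1 : G) ∈ classF x := huniv ▸ Finset.mem_univ 1
        obtain ⟨g, hg⟩ := mem_classF.mp h1
        have hx1 : x = 1 := by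
          have := hg
          group at this
          -- g * x * g⁻¹ = 1 → x = 1
          have : x = g⁻¹ * 1 * g := by
            rw [← hg]; group
          simpa using this
        have : classF x = {1} := by
          ext y; simp [mem_classF, hx1, eq_comm]
        rw [this] at heq
        simp at heq
        omega
    -- class card divides n and is < n, so 2 * card ≤ n
    obtain ⟨k, hk⟩ := hdvd
    have hk2 : 2 ≤ k := by
      rcases Nat.lt_or_ge k 2 with h | h
      · interval_cases k <;> omega
      · exact h
    have h2c : 2 * (classF x).card ≤ n := by
      calc 2 * (classF x).card ≤ (classF x).card * k := by nlinarith
        _ = n := hk.symm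
    omega
  · push_neg at hbig
    have hex : ∃ k, ∃ A : Finset G, ((∀ g a : G, a ∈ A → g * a * g⁻¹ ∈ A) ∧ n ≤ 3 * A.card)
        ∧ A.card = k := by
      refine ⟨(Finset.univ : Finset G).card, Finset.univ, ⟨fun g a _ => Finset.mem_univ _, ?_⟩, rfl⟩
      rw [hn, Finset.card_univ]; omega
    obtain ⟨A, ⟨hAnorm, hAcard⟩, hAk⟩ := Nat.find_spec hex
    have hmin : ∀ B : Finset G, (∀ g a : G, a ∈ B → g * a * g⁻¹ ∈ B) → n ≤ 3 * B.card →
        Nat.find hex ≤ B.card := fun B h1 h2 => Nat.find_le ⟨B, ⟨h1, h2⟩, rfl⟩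
    have hApos : A.Nonempty := by
      rw [← Finset.card_pos]; omega
    obtain ⟨x, hxA⟩ := hApos
    have hCsub : classF x ⊆ A := by
      intro y hy
      obtain ⟨g, rfl⟩ := mem_classF.mp hy
      exact hAnorm g x hxA
    set A' := A \ classF x with hA'
    have hA'norm : ∀ g a : G, a ∈ A' → g * a * g⁻¹ ∈ A' := by
      intro g a ha
      rw [hA', Finset.mem_sdiff] at ha ⊢
      exact ⟨hAnorm g a ha.1, fun h => ha.2 (classF_conj' g h)⟩
    have hA'card : A'.card = A.card - (classF x).card := Finset.card_sdiff_of_subset hCsub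
    have hCpos : 0 < (classF x).card := Finset.card_pos.mpr ⟨x, self_mem_classF x⟩
    have hA'lt : ¬ (n ≤ 3 * A'.card) := by
      intro h
      have := hmin A' hA'norm h
      have hle : (classF x).card ≤ A.card := Finset.card_le_card hCsub
      omega
    have hCsmall := hbig x
    refine ⟨A, hAnorm, hAcard, ?_⟩
    have hle : (classF x).card ≤ A.card := Finset.card_le_card hCsub
    omega

end Aux

/-- every nontrivial finite group has normal subsets `S`, `T`,
each of cardinality at least `|G|/3`, whose product set avoids the identity. -/
theorem stmt_0 (G : Type*) [Group G] [Fintype G] [Nontrivial G] :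
    ∃ S T : Set G,
      (∀ g : G, ∀ s ∈ S, g * s * g⁻¹ ∈ S) ∧
      (∀ g : G, ∀ t ∈ T, g * t * g⁻¹ ∈ T) ∧
      (Fintype.card G : ℝ) / 3 ≤ Nat.card S ∧
      (Fintype.card G : ℝ) / 3 ≤ Nat.card T ∧
      (1 : G) ∉ S * T := by
  classical
  obtain ⟨A, hAnorm, h1, h2⟩ := exists_middle G
  set n := Fintype.card G with hn
  have hAle : A.card ≤ n := by rw [hn]; exact Finset.card_le_univ _
  refine ⟨((A⁻¹ : Finset G) : Set G), ((Aᶜ : Finset G) : Set G), ?_, ?_, ?_, ?_, ?_⟩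
  · intro g s hs
    simp only [Finset.coe_inv, Set.mem_inv, Finset.mem_coe] at hs ⊢
    have := hAnorm g s⁻¹ hs
    simpa [mul_assoc] using this
  · intro g t ht
    simp only [Finset.coe_compl, Set.mem_compl_iff, Finset.mem_coe] at ht ⊢
    intro h
    exact ht (by simpa [mul_assoc] using hAnorm g⁻¹ _ h)
  · have hc : Nat.card ((A⁻¹ : Finset G) : Set G) = A.card := by
      simp only [Finset.coe_sort_coe, Nat.card_eq_finsetCard, Finset.card_inv]
    rw [hc, div_le_iff₀ (by norm_num : (0:ℝ) < 3)]
    have : (n : ℝ) ≤ 3 * A.card := by exact_mod_cast h1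
    linarith
  · have hc : Nat.card ((Aᶜ : Finset G) : Set G) = n - A.card := by
      simp only [Finset.coe_sort_coe, Nat.card_eq_finsetCard, Finset.card_compl, hn]
    rw [hc, div_le_iff₀ (by norm_num : (0:ℝ) < 3)]
    have h3 : n ≤ 3 * (n - A.card) := by omega
    have : (n : ℝ) ≤ 3 * ((n - A.card : ℕ) : ℝ) := by exact_mod_cast h3
    linarith
  · rintro ⟨s, hs, t, ht, hst⟩
    simp only [Finset.coe_inv, Set.mem_inv, Finset.mem_coe] at hs
    simp only [Finset.coe_compl, Set.mem_compl_iff, Finset.mem_coe] at ht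
    have : t = s⁻¹ := eq_inv_of_mul_eq_one_right hst
    exact ht (this ▸ hs)
end

section
/- Let q be a prime power, n ≥ 2, and 1 ≤ m ≤ n−1. Let V be an m-dimensional subspace of F_q^n, and let Stab(V) = {g ∈ SL_n(F_q) : gv = v for all v ∈ V} be its pointwise stabilizer in SL_n(F_q). Then |SL_n(F_q)|/q^{mn} ≤ |Stab(V)| < 4·|SL_n(F_q)|/q^{mn}. -/
set_option synthInstance.maxHeartbeats 1000000
set_option maxHeartbeats 1000000

open Matrix

section Aux

variable {F : Type*} [Field F] [Fintype F] [DecidableEq F]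

lemma aux_extend_li {n : ℕ} (j : ℕ) : ∀ k (hk : k ≤ n), n - k ≤ j → ∀ (v : Fin k → Fin n → F),
    LinearIndependent F v →
    ∃ w : Fin n → Fin n → F, LinearIndependent F w ∧ ∀ i : Fin k, w (Fin.castLE hk i) = v i := by
  induction j with
  | zero =>
    intro k hk hj v hv
    obtain rfl : k = n := by omega
    exact ⟨v, hv, fun i => by simp⟩
  | succ j ih =>
    intro k hk hj v hv
    rcases eq_or_lt_of_le hk with rfl | hlt
    · exact ⟨v, hv, fun i => by simp⟩
    · have hne : Submodule.span F (Set.range v) ≠ ⊤ := by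
        intro h
        have h1 : Module.finrank F (Submodule.span F (Set.range v)) = k := by
          rw [finrank_span_eq_card hv]; simp
        rw [h, finrank_top] at h1
        simp [Module.finrank_fintype_fun_eq_card] at h1
        omega
      obtain ⟨x, hx⟩ : ∃ x, x ∉ Submodule.span F (Set.range v) := by
        by_contra h
        push_neg at h
        exact hne (Submodule.eq_top_iff'.2 h)
      have hsnoc : LinearIndependent F (Fin.snoc v x : Fin (k+1) → Fin n → F) :=
        linearIndependent_fin_snoc.2 ⟨hv, hx⟩
      obtain ⟨w, hw, hwe⟩ := ih (k+1) (by omega) (by omega) _ hsnoc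
      refine ⟨w, hw, fun i => ?_⟩
      have := hwe (Fin.castSucc i)
      rw [Fin.snoc_castSucc] at this
      exact this

lemma aux_isUnit_det {n : ℕ} (hn : 0 < n) (w : Fin n → Fin n → F) (hw : LinearIndependent F w) :
    IsUnit ((Matrix.of w)ᵀ).det := by
  have : Nonempty (Fin n) := Fin.pos_iff_nonempty.1 hn
  have hcard : Fintype.card (Fin n) = Module.finrank F (Fin n → F) := by simp
  let b := basisOfLinearIndependentOfCardEqFinrank hw hcard
  have := (Pi.basisFun F (Fin n)).invertibleToMatrix b
  rw [← Module.Basis.coePiBasisFun.toMatrix_eq_transpose,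
    ← coe_basisOfLinearIndependentOfCardEqFinrank hw hcard]
  exact isUnit_det_of_invertible ((Pi.basisFun F (Fin n)).toMatrix ⇑b)

lemma aux_trans {n m : ℕ} (hn : 2 ≤ n) (hm : m ≤ n - 1) (u v : Fin m → Fin n → F)
    (hu : LinearIndependent F u) (hv : LinearIndependent F v) :
    ∃ g : Matrix.SpecialLinearGroup (Fin n) F,
      ∀ i, (g : Matrix (Fin n) (Fin n) F).mulVec (u i) = v i := by
  have hmn : m ≤ n := by omega
  obtain ⟨a, ha, hae⟩ := aux_extend_li (n - m) m hmn le_rfl u hu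
  obtain ⟨b, hb, hbe⟩ := aux_extend_li (n - m) m hmn le_rfl v hv
  set A := (Matrix.of a)ᵀ with hA
  set B := (Matrix.of b)ᵀ with hB
  have hAu : IsUnit A.det := aux_isUnit_det (by omega) a ha
  have hBu : IsUnit B.det := aux_isUnit_det (by omega) b hb
  have hA0 : A.det ≠ 0 := hAu.ne_zero
  have hB0 : B.det ≠ 0 := hBu.ne_zero
  set ℓ : Fin n := ⟨n - 1, by omega⟩ with hℓ
  set c : F := A.det / B.det with hc
  set B' := B.updateCol ℓ (c • fun i => B i ℓ) with hB'
  have hdetB' : B'.det = c * B.det := by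
    rw [hB', det_updateCol_smul, updateCol_eq_self]
  have hdet : (B' * A⁻¹).det = 1 := by
    rw [det_mul, hdetB', det_nonsing_inv, hc]
    field_simp
    exact Ring.mul_inverse_cancel _ hAu
  refine ⟨⟨B' * A⁻¹, hdet⟩, fun i => ?_⟩
  have hui : u i = A.mulVec (Pi.single (Fin.castLE hmn i) 1) := by
    rw [mulVec_single_one, hA]
    exact (hae i).symm
  show (B' * A⁻¹).mulVec (u i) = v i
  rw [hui, mulVec_mulVec, Matrix.mul_assoc, nonsing_inv_mul A hAu, Matrix.mul_one,
    mulVec_single_one]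
  have hne : Fin.castLE hmn i ≠ ℓ := by
    intro h
    apply_fun Fin.val at h
    simp only [hℓ, Fin.coe_castLE] at h
    have := i.isLt
    omega
  ext r
  rw [col_apply, hB', updateCol_ne hne]
  show b (Fin.castLE hmn i) r = v i r
  rw [hbe i]

instance auxAction {n m : ℕ} :
    MulAction (Matrix.SpecialLinearGroup (Fin n) F) (Fin m → Fin n → F) where
  smul g s := fun i => (g : Matrix (Fin n) (Fin n) F).mulVec (s i)
  one_smul s := by
    funext i
    show ((1 : Matrix.SpecialLinearGroup (Fin n) F) : Matrix (Fin n) (Fin n) F).mulVec (s i) = s i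
    rw [Matrix.SpecialLinearGroup.coe_one, one_mulVec]
  mul_smul g h s := by
    funext i
    show ((g * h : Matrix.SpecialLinearGroup (Fin n) F) : Matrix (Fin n) (Fin n) F).mulVec (s i) = _
    rw [Matrix.SpecialLinearGroup.coe_mul, ← mulVec_mulVec]
    rfl

attribute [local instance] Fintype.ofFinite

lemma aux_card (n m : ℕ) (hn : 2 ≤ n) (hm2 : m ≤ n - 1)
    (W : Submodule F (Fin n → F)) (hW : Module.finrank F W = m) :
    Nat.card (Matrix.SpecialLinearGroup (Fin n) F) =
      (∏ i : Fin m, ((Fintype.card F) ^ n - (Fintype.card F) ^ (i : ℕ))) *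
      Nat.card {g : Matrix.SpecialLinearGroup (Fin n) F |
        ∀ v ∈ W, (g : Matrix (Fin n) (Fin n) F).mulVec v = v} := by
  classical
  set G := Matrix.SpecialLinearGroup (Fin n) F
  obtain ⟨bW⟩ : Nonempty (Module.Basis (Fin m) F W) := ⟨Module.finBasisOfFinrankEq F W hW⟩
  set u : Fin m → Fin n → F := fun i => (bW i : Fin n → F) with hu_def
  have hu : LinearIndependent F u := by
    have := bW.linearIndependent
    have h2 := this.map' W.subtype (Submodule.ker_subtype W)
    exact h2
  have hspan : Submodule.span F (Set.range u) = W := by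
    have : Set.range u = W.subtype '' Set.range bW := by
      rw [← Set.range_comp]; rfl
    rw [this, ← Submodule.map_span, bW.span_eq, Submodule.map_top, Submodule.range_subtype]
  have hstab : {g : G | ∀ v ∈ W, (g : Matrix (Fin n) (Fin n) F).mulVec v = v} =
      ↑(MulAction.stabilizer G u) := by
    ext g
    simp only [Set.mem_setOf_eq, SetLike.mem_coe, MulAction.mem_stabilizer_iff]
    constructor
    · intro h
      funext i
      exact h (u i) (hspan ▸ Submodule.subset_span (Set.mem_range_self i))
    · intro h v hv
      have hle : Submodule.span F (Set.range u) ≤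
          LinearMap.eqLocus ((g : Matrix (Fin n) (Fin n) F).mulVecLin) LinearMap.id := by
        rw [Submodule.span_le]
        rintro _ ⟨i, rfl⟩
        have : (g : Matrix (Fin n) (Fin n) F).mulVec (u i) = u i := congrFun h i
        simpa [LinearMap.eqLocus, mulVecLin_apply] using this
      have := hle (hspan ▸ hv)
      simpa [LinearMap.eqLocus, mulVecLin_apply] using this
  have horb : MulAction.orbit G u = {s : Fin m → Fin n → F | LinearIndependent F s} := by
    ext s
    constructor
    · rintro ⟨g, rfl⟩
      show LinearIndependent F (fun i => (g : Matrix (Fin n) (Fin n) F).mulVec (u i))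
      have hinj : Function.Injective ((g : Matrix (Fin n) (Fin n) F).mulVecLin) := by
        intro x y hxy
        have h3 := congrArg (((g⁻¹ : G) : Matrix (Fin n) (Fin n) F).mulVec) hxy
        rw [mulVecLin_apply, mulVecLin_apply, mulVec_mulVec, mulVec_mulVec,
          ← Matrix.SpecialLinearGroup.coe_mul, inv_mul_cancel,
          Matrix.SpecialLinearGroup.coe_one, one_mulVec, one_mulVec] at h3
        exact h3
      have := hu.map' _ (LinearMap.ker_eq_bot.2 hinj)
      exact this
    · intro hs
      obtain ⟨g, hg⟩ := aux_trans hn hm2 u s hu hs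
      exact ⟨g, funext hg⟩
  have hos : Nat.card (MulAction.orbit G u) * Nat.card (MulAction.stabilizer G u) = Nat.card G := by
    rw [Nat.card_eq_fintype_card, Nat.card_eq_fintype_card, Nat.card_eq_fintype_card]
    exact MulAction.card_orbit_mul_card_stabilizer_eq_card_group G u
  have hcard_orbit : Nat.card (MulAction.orbit G u) =
      ∏ i : Fin m, ((Fintype.card F) ^ n - (Fintype.card F) ^ (i : ℕ)) := by
    rw [horb]
    have : Nat.card {s : Fin m → Fin n → F | LinearIndependent F s} =
        Nat.card {s : Fin m → Fin n → F // LinearIndependent F s} := rfl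
    rw [this, card_linearIndependent (by
      simp [Module.finrank_fintype_fun_eq_card]; omega)]
    simp [Module.finrank_fintype_fun_eq_card]
  rw [← hos, hcard_orbit, hstab]
  rfl

end Aux

lemma aux_weier {ι : Type*} (s : Finset ι) (x : ι → ℝ) :
    (∀ i ∈ s, 0 ≤ x i) → (∀ i ∈ s, x i ≤ 1) →
    1 - ∑ i ∈ s, x i ≤ ∏ i ∈ s, (1 - x i) := by
  induction s using Finset.cons_induction with
  | empty => simp
  | cons a s ha ih =>
    intro h0 h1
    rw [Finset.prod_cons, Finset.sum_cons]
    have hP : 0 ≤ ∏ i ∈ s, (1 - x i) :=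
      Finset.prod_nonneg fun i hi => by linarith [h1 i (Finset.mem_cons_of_mem hi)]
    have hih := ih (fun i hi => h0 i (Finset.mem_cons_of_mem hi))
      (fun i hi => h1 i (Finset.mem_cons_of_mem hi))
    have hsn : 0 ≤ ∑ i ∈ s, x i :=
      Finset.sum_nonneg fun i hi => h0 i (Finset.mem_cons_of_mem hi)
    nlinarith [h0 a (Finset.mem_cons_self a s), h1 a (Finset.mem_cons_self a s)]

lemma aux_lower (q n m : ℕ) (hq : 2 ≤ q) (hmn : m ≤ n) :
    (∏ i : Fin m, ((q:ℝ) ^ n - (q:ℝ) ^ (i : ℕ))) ≤ (q:ℝ) ^ (m * n) := by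
  have hq1 : (1:ℝ) ≤ q := by exact_mod_cast Nat.one_le_of_lt hq
  calc (∏ i : Fin m, ((q:ℝ) ^ n - (q:ℝ) ^ (i : ℕ)))
      ≤ ∏ _i : Fin m, (q:ℝ) ^ n := by
        apply Finset.prod_le_prod
        · intro i _
          have : (q:ℝ) ^ (i:ℕ) ≤ (q:ℝ) ^ n := pow_le_pow_right₀ hq1 (by omega)
          linarith
        · intro i _
          have h1 : (0:ℝ) ≤ (q:ℝ) ^ (i:ℕ) := by positivity
          linarith
    _ = (q:ℝ) ^ (m * n) := by
        rw [Finset.prod_const, Finset.card_univ, Fintype.card_fin, ← pow_mul, mul_comm]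

lemma aux_upper (q n m : ℕ) (hq : 2 ≤ q) (hn : 2 ≤ n) (hm2 : m ≤ n - 1) :
    (q:ℝ) ^ (m * n) < 4 * ∏ i : Fin m, ((q:ℝ) ^ n - (q:ℝ) ^ (i : ℕ)) := by
  have hq0 : (0:ℝ) < q := by positivity
  have hq1 : (1:ℝ) ≤ q := by exact_mod_cast Nat.one_le_of_lt hq
  have hqn : (0:ℝ) < (q:ℝ) ^ n := by positivity
  set x : Fin m → ℝ := fun i => (q:ℝ) ^ (i:ℕ) / (q:ℝ) ^ n with hx
  have hfac : ∀ i : Fin m, (q:ℝ) ^ n - (q:ℝ) ^ (i:ℕ) = (q:ℝ) ^ n * (1 - x i) := by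
    intro i; simp only [hx]; rw [mul_sub, mul_one, mul_div_assoc', mul_div_cancel_left₀ _ hqn.ne']
  have hx0 : ∀ i ∈ Finset.univ (α := Fin m), 0 ≤ x i := fun i _ => by positivity
  have hx1 : ∀ i ∈ Finset.univ (α := Fin m), x i ≤ 1 := by
    intro i _
    rw [hx, div_le_one hqn]
    exact pow_le_pow_right₀ hq1 (by omega)
  have hsum : ∑ i : Fin m, x i ≤ 1 / 2 := by
    have h1 : ∑ i : Fin m, x i = (∑ i ∈ Finset.range m, (q:ℝ) ^ i) / (q:ℝ) ^ n := by
      rw [Finset.sum_div, ← Fin.sum_univ_eq_sum_range (fun i => (q:ℝ) ^ i / (q:ℝ) ^ n) m]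
    have h2 : (∑ i ∈ Finset.range m, (q:ℝ) ^ i) ≤ (q:ℝ) ^ m := by
      have := Nat.geomSum_lt hq (s := Finset.range m) (n := m) (fun k hk => Finset.mem_range.1 hk)
      have hcast : ((∑ k ∈ Finset.range m, q ^ k : ℕ) : ℝ) ≤ ((q ^ m : ℕ) : ℝ) := by
        exact_mod_cast this.le
      push_cast at hcast
      exact hcast
    have h3 : (q:ℝ) ^ m ≤ (q:ℝ) ^ (n - 1) := pow_le_pow_right₀ hq1 hm2
    have h4 : (q:ℝ) ^ n = (q:ℝ) ^ (n-1) * q := by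
      rw [← pow_succ]; congr 1; omega
    rw [h1, div_le_iff₀ hqn]
    have h5 : (1:ℝ)/2 * ((q:ℝ)^(n-1) * q) ≥ (q:ℝ)^(n-1) := by
      have : (2:ℝ) ≤ q := by exact_mod_cast hq
      nlinarith [pow_pos hq0 (n-1)]
    calc (∑ i ∈ Finset.range m, (q:ℝ) ^ i) ≤ (q:ℝ)^(n-1) := le_trans h2 h3
      _ ≤ 1/2 * (q:ℝ)^n := by rw [h4]; linarith
  have hw := aux_weier Finset.univ x hx0 hx1
  have hprod : ∏ i : Fin m, ((q:ℝ) ^ n - (q:ℝ) ^ (i:ℕ)) =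
      (q:ℝ) ^ (m * n) * ∏ i : Fin m, (1 - x i) := by
    calc ∏ i : Fin m, ((q:ℝ) ^ n - (q:ℝ) ^ (i:ℕ))
        = ∏ i : Fin m, ((q:ℝ) ^ n * (1 - x i)) := by
          exact Finset.prod_congr rfl fun i _ => hfac i
      _ = (q:ℝ) ^ (m * n) * ∏ i : Fin m, (1 - x i) := by
          rw [Finset.prod_mul_distrib, Finset.prod_const, Finset.card_univ, Fintype.card_fin,
            ← pow_mul, mul_comm n m]
  have hps : (1:ℝ)/2 ≤ ∏ i : Fin m, (1 - x i) := by linarith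
  have hqmn : (0:ℝ) < (q:ℝ) ^ (m*n) := by positivity
  rw [hprod]
  nlinarith

/-- for an `m`-dimensional subspace `W` of `F_q^n` (with
`1 ≤ m ≤ n-1`), its pointwise stabilizer in `SL_n(F_q)` has cardinality
between `|SL_n(F_q)|/q^(mn)` and `4|SL_n(F_q)|/q^(mn)`. -/
theorem stmt_3 (F : Type*) [Field F] [Fintype F] [DecidableEq F]
    (n m : ℕ) (hn : 2 ≤ n) (hm1 : 1 ≤ m) (hm2 : m ≤ n - 1)
    (W : Submodule F (Fin n → F)) (hW : Module.finrank F W = m) :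
    (Nat.card (Matrix.SpecialLinearGroup (Fin n) F) : ℝ) / (Fintype.card F : ℝ) ^ (m * n) ≤
      (Nat.card {g : Matrix.SpecialLinearGroup (Fin n) F |
        ∀ v ∈ W, (g : Matrix (Fin n) (Fin n) F).mulVec v = v} : ℝ) ∧
    (Nat.card {g : Matrix.SpecialLinearGroup (Fin n) F |
        ∀ v ∈ W, (g : Matrix (Fin n) (Fin n) F).mulVec v = v} : ℝ) <
      4 * (Nat.card (Matrix.SpecialLinearGroup (Fin n) F) : ℝ) / (Fintype.card F : ℝ) ^ (m * n) := by
  classical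
  have hq : 2 ≤ Fintype.card F := Fintype.one_lt_card
  set q := Fintype.card F with hq_def
  set S := {g : Matrix.SpecialLinearGroup (Fin n) F |
        ∀ v ∈ W, (g : Matrix (Fin n) (Fin n) F).mulVec v = v} with hS_def
  have hkey : Nat.card (Matrix.SpecialLinearGroup (Fin n) F) =
      (∏ i : Fin m, (q ^ n - q ^ (i:ℕ))) * Nat.card S := aux_card n m hn hm2 W hW
  have hPr : ((∏ i : Fin m, (q ^ n - q ^ (i:ℕ)) : ℕ) : ℝ) =
      ∏ i : Fin m, ((q:ℝ) ^ n - (q:ℝ) ^ (i:ℕ)) := by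
    rw [Nat.cast_prod]
    refine Finset.prod_congr rfl fun i _ => ?_
    rw [Nat.cast_sub (Nat.pow_le_pow_right (by omega) (by omega))]
    push_cast
    ring
  have hC : (Nat.card (Matrix.SpecialLinearGroup (Fin n) F) : ℝ) =
      (∏ i : Fin m, ((q:ℝ) ^ n - (q:ℝ) ^ (i:ℕ))) * (Nat.card S : ℝ) := by
    rw [hkey, Nat.cast_mul, hPr]
  have hS0 : 0 < Nat.card S := by
    have : Nonempty S := ⟨⟨1, fun v _ => by
      rw [Matrix.SpecialLinearGroup.coe_one, Matrix.one_mulVec]⟩⟩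
    exact Nat.card_pos
  have hSpos : (0:ℝ) < (Nat.card S : ℝ) := by exact_mod_cast hS0
  have hqmn : (0:ℝ) < (q:ℝ) ^ (m*n) := by positivity
  constructor
  · rw [div_le_iff₀ hqmn, hC]
    have hlow := aux_lower q n m hq (by omega)
    nlinarith
  · rw [lt_div_iff₀ hqmn, hC]
    have hup := aux_upper q n m hq hn hm2
    calc (Nat.card ↥S : ℝ) * (q:ℝ) ^ (m*n)
        < (Nat.card ↥S : ℝ) * (4 * ∏ i : Fin m, ((q:ℝ) ^ n - (q:ℝ) ^ (i:ℕ))) :=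
          mul_lt_mul_of_pos_left hup hSpos
      _ = 4 * ((∏ i : Fin m, ((q:ℝ) ^ n - (q:ℝ) ^ (i:ℕ))) * (Nat.card ↥S : ℝ)) := by ring
end

section
/- Let q be a prime power, n ≥ 2, and 1 ≤ m ≤ n−1. Then the number of elements g ∈ SL_n(F_q) whose fixed subspace {v ∈ F_q^n : gv = v} has dimension at least m is strictly less than 16·q^{−m²}·|SL_n(F_q)|. -/
section SLcountAux
open Matrix Module LinearMap

section helpers

variable {F : Type*} [Field F] [Fintype F] [DecidableEq F] {n : ℕ}

lemma SL_leftinv (g : Matrix.SpecialLinearGroup (Fin n) F) (x : Fin n → F) :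
    Matrix.toLin' ((g⁻¹ : Matrix.SpecialLinearGroup (Fin n) F) : Matrix (Fin n) (Fin n) F)
      (Matrix.toLin' (g : Matrix (Fin n) (Fin n) F) x) = x := by
  rw [← Matrix.toLin'_mul_apply, ← Matrix.SpecialLinearGroup.coe_mul, inv_mul_cancel,
    Matrix.SpecialLinearGroup.coe_one, Matrix.toLin'_one, LinearMap.id_apply]

lemma SL_inj (g : Matrix.SpecialLinearGroup (Fin n) F) :
    Function.Injective (Matrix.toLin' (g : Matrix (Fin n) (Fin n) F)) := by
  intro a b hab
  have := congrArg (Matrix.toLin' ((g⁻¹ : Matrix.SpecialLinearGroup (Fin n) F) :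
    Matrix (Fin n) (Fin n) F)) hab
  rwa [SL_leftinv, SL_leftinv] at this

end helpers

lemma exists_SL_map (F : Type*) [Field F] [Fintype F] [DecidableEq F] {n m : ℕ} (hm : m < n)
    (t : Fin m → (Fin n → F)) (ht : LinearIndependent F t) :
    ∃ g : Matrix.SpecialLinearGroup (Fin n) F,
      ∀ i, Matrix.toLin' (g : Matrix (Fin n) (Fin n) F) (Pi.single (Fin.castLE hm.le i) 1) = t i := by
  classical
  have hmn : m + (n - m) = n := Nat.add_sub_cancel' hm.le
  -- basis of the span
  set W : Submodule F (Fin n → F) := Submodule.span F (Set.range t) with hW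
  obtain ⟨W', hc⟩ := Submodule.exists_isCompl W
  have hfW : finrank F W = m := by rw [hW, finrank_span_eq_card ht]; simp
  have hfV : finrank F (Fin n → F) = n := by simp [Module.finrank_fintype_fun_eq_card]
  have hfW' : finrank F W' = n - m := by
    have := Submodule.finrank_add_eq_of_isCompl hc
    omega
  let bW : Basis (Fin m) F W := Basis.span ht
  let bW' : Basis (Fin (n - m)) F W' := (Module.finBasis F W').reindex (finCongr hfW')
  let b : Basis (Fin m ⊕ Fin (n - m)) F (Fin n → F) :=
    (bW.prod bW').map (Submodule.prodEquivOfIsCompl W W' hc)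
  have hb : ∀ i, b (Sum.inl i) = t i := by
    intro i
    simp only [b, Basis.map_apply]
    have h1 : (bW.prod bW') (Sum.inl i) = (bW i, 0) := by
      ext
      · simp [Basis.prod_apply_inl_fst]
      · simp [Basis.prod_apply_inl_snd]
    rw [h1, Submodule.coe_prodEquivOfIsCompl']
    simp only [Submodule.coe_zero, add_zero, bW]
    exact congrArg Subtype.val (Basis.span_apply ht i)
  -- the equivalence of index types
  let σ : (Fin m ⊕ Fin (n - m)) ≃ Fin n := finSumFinEquiv.trans (finCongr hmn)
  have hσ : ∀ i : Fin m, σ (Sum.inl i) = Fin.castLE hm.le i := by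
    intro i; ext; simp [σ]
  -- the matrix with columns b
  let M : Matrix (Fin n) (Fin n) F := (Pi.basisFun F (Fin n)).toMatrix ⇑(b.reindex σ)
  have hMcol : ∀ j i, M i j = (b.reindex σ) j i := by
    intro j i
    simp [M, Basis.toMatrix_apply]
  have hMdet : IsUnit M.det := by
    have := (Pi.basisFun F (Fin n)).invertibleToMatrix (b.reindex σ)
    exact isUnit_det_of_invertible M
  set d : F := M.det with hd
  have hd0 : d ≠ 0 := hMdet.ne_zero
  -- index to scale
  have hnm : 0 < n - m := by omega
  let j₁ : Fin n := σ (Sum.inr ⟨0, hnm⟩)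
  let A : Matrix (Fin n) (Fin n) F := M.updateCol j₁ (d⁻¹ • fun i => M i j₁)
  have hAdet : A.det = 1 := by
    rw [Matrix.det_updateCol_smul]
    rw [Matrix.updateCol_eq_self]
    field_simp
    exact hd.symm
  refine ⟨⟨A, hAdet⟩, ?_⟩
  intro i
  rw [Matrix.toLin'_apply]
  have hne : Fin.castLE hm.le i ≠ j₁ := by
    rw [← hσ i]
    simp only [j₁, ne_eq, EmbeddingLike.apply_eq_iff_eq]
    intro h; exact Sum.inl_ne_inr h
  ext r
  rw [Matrix.mulVec_single]
  simp only [Matrix.SpecialLinearGroup.coe_mk, mul_one]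
  rw [MulOpposite.op_one, one_smul]
  show A r (Fin.castLE hm.le i) = t i r
  simp only [A, Matrix.updateCol_apply, if_neg hne]
  rw [hMcol]
  rw [← hσ i]
  rw [Basis.reindex_apply, Equiv.symm_apply_apply, hb]

set_option maxHeartbeats 1000000 in
lemma count_key (F : Type*) [Field F] [Fintype F] [DecidableEq F] {n m : ℕ} (hm : m < n) :
    Fintype.card {g : Matrix.SpecialLinearGroup (Fin n) F //
        m ≤ finrank F (LinearMap.ker
          (Matrix.toLin' (g : Matrix (Fin n) (Fin n) F) - LinearMap.id))}
      * ∏ i : Fin m, (Fintype.card F ^ m - Fintype.card F ^ (i : ℕ))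
    ≤ Fintype.card (Matrix.SpecialLinearGroup (Fin n) F) := by
  classical
  set q := Fintype.card F with hq
  set G := Matrix.SpecialLinearGroup (Fin n) F with hG
  set P := ∏ i : Fin m, (q ^ m - q ^ (i : ℕ)) with hP
  set Q : G → (Fin m → Fin n → F) → Prop := fun g t =>
    LinearIndependent F t ∧ ∀ i, Matrix.toLin' (g : Matrix (Fin n) (Fin n) F) (t i) = t i with hQ
  -- the pair count
  have hpair1 : Fintype.card {p : G × (Fin m → Fin n → F) // Q p.1 p.2}
      = ∑ g : G, Fintype.card {t // Q g t} := by
    rw [Fintype.card_congr (Equiv.subtypeProdEquivSigmaSubtype Q), Fintype.card_sigma]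
  -- lower bound for elements with a big fixed space
  have hlow : ∀ g : G, m ≤ finrank F (LinearMap.ker
      (Matrix.toLin' (g : Matrix (Fin n) (Fin n) F) - LinearMap.id)) →
      P ≤ Fintype.card {t // Q g t} := by
    intro g hg
    set K := LinearMap.ker (Matrix.toLin' (g : Matrix (Fin n) (Fin n) F) - LinearMap.id) with hK
    obtain ⟨f, hf⟩ := exists_linearIndependent_of_le_finrank hg
    have ht₀ : LinearIndependent F (fun i => (f i : Fin n → F)) :=
      hf.map' K.subtype K.ker_subtype
    set W : Submodule F (Fin n → F) := Submodule.span F (Set.range fun i => (f i : Fin n → F))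
      with hW
    have hWK : W ≤ K := Submodule.span_le.mpr (by rintro _ ⟨i, rfl⟩; exact (f i).2)
    have hfW : finrank F ↥W = m := by rw [hW, finrank_span_eq_card ht₀]; simp
    have hcardW : Fintype.card {s : Fin m → ↥W // LinearIndependent F s} = P := by
      rw [← Nat.card_eq_fintype_card, card_linearIndependent (le_of_eq hfW.symm), hfW]
    rw [← hcardW]
    apply Fintype.card_le_of_injective (fun s => ⟨fun i => (s.1 i : Fin n → F),
      ⟨s.2.map' W.subtype W.ker_subtype, fun i => by
        have hmem := hWK (s.1 i).2
        rw [hK, LinearMap.mem_ker, LinearMap.sub_apply, LinearMap.id_apply, sub_eq_zero] at hmem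
        exact hmem⟩⟩)
    intro a b hab
    apply Subtype.ext; funext i
    exact Subtype.ext (congrFun (congrArg Subtype.val hab) i)
  -- the lower bound on the pair count
  have hlb : Fintype.card {g : G // m ≤ finrank F (LinearMap.ker
        (Matrix.toLin' (g : Matrix (Fin n) (Fin n) F) - LinearMap.id))} * P
      ≤ Fintype.card {p : G × (Fin m → Fin n → F) // Q p.1 p.2} := by
    rw [hpair1, Fintype.card_subtype]
    calc (Finset.univ.filter fun g : G => m ≤ finrank F (LinearMap.ker
          (Matrix.toLin' (g : Matrix (Fin n) (Fin n) F) - LinearMap.id))).card * P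
        = ∑ _g ∈ (Finset.univ.filter fun g : G => m ≤ finrank F (LinearMap.ker
          (Matrix.toLin' (g : Matrix (Fin n) (Fin n) F) - LinearMap.id))), P := by
          rw [Finset.sum_const, smul_eq_mul]
      _ ≤ ∑ g ∈ (Finset.univ.filter fun g : G => m ≤ finrank F (LinearMap.ker
          (Matrix.toLin' (g : Matrix (Fin n) (Fin n) F) - LinearMap.id))),
            Fintype.card {t // Q g t} :=
          Finset.sum_le_sum fun g hg => hlow g (Finset.mem_filter.mp hg).2
      _ ≤ ∑ g : G, Fintype.card {t // Q g t} :=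
          Finset.sum_le_sum_of_subset (Finset.filter_subset _ _)
  -- the second decomposition of the pair count
  have hpair2 : Fintype.card {p : G × (Fin m → Fin n → F) // Q p.1 p.2}
      = ∑ t : Fin m → Fin n → F, Fintype.card {g : G // Q g t} := by
    rw [Fintype.card_congr
      (⟨fun p => ⟨p.1.2, p.1.1, p.2⟩, fun x => ⟨(x.2.1, x.1), x.2.2⟩,
        fun p => rfl, fun x => rfl⟩ :
        {p : G × (Fin m → Fin n → F) // Q p.1 p.2} ≃ Σ t : Fin m → Fin n → F, {g : G // Q g t}),
      Fintype.card_sigma]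
  -- the standard tuple
  set v₀ : Fin m → Fin n → F := fun i => Pi.single (Fin.castLE hm.le i) 1 with hv₀
  have hv₀li : LinearIndependent F v₀ := by
    have := (Pi.basisFun F (Fin n)).linearIndependent.comp _ (Fin.castLE_injective hm.le)
    simpa [hv₀, Function.comp_def] using this
  set Φ : G → (Fin m → Fin n → F) := fun g i =>
    Matrix.toLin' (g : Matrix (Fin n) (Fin n) F) (v₀ i) with hΦ
  have hfib : ∀ t : Fin m → Fin n → F,
      Fintype.card {g : G // Q g t} = Fintype.card {g : G // Φ g = t} := by
    intro t
    by_cases ht : LinearIndependent F t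
    · obtain ⟨h, hh⟩ := exists_SL_map F hm t ht
      refine Fintype.card_congr ⟨fun g => ⟨g.1 * h, funext fun i => ?_⟩,
        fun g => ⟨g.1 * h⁻¹, ht, fun i => ?_⟩, fun g => ?_, fun g => ?_⟩
      · show Matrix.toLin' ((g.1 * h : G) : Matrix (Fin n) (Fin n) F) (v₀ i) = t i
        rw [Matrix.SpecialLinearGroup.coe_mul, Matrix.toLin'_mul_apply, hh i, g.2.2 i]
      · show Matrix.toLin' ((g.1 * h⁻¹ : G) : Matrix (Fin n) (Fin n) F) (t i) = t i
        have hinv : Matrix.toLin' ((h⁻¹ : G) : Matrix (Fin n) (Fin n) F) (t i) = v₀ i := by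
          rw [← hh i, SL_leftinv]
        rw [Matrix.SpecialLinearGroup.coe_mul, Matrix.toLin'_mul_apply, hinv]
        exact congrFun g.2 i
      · apply Subtype.ext; simp [mul_assoc]; exact mul_inv_cancel h
      · apply Subtype.ext; simp [mul_assoc]; exact inv_mul_cancel h
    · have h1 : IsEmpty {g : G // Q g t} := ⟨fun g => ht g.2.1⟩
      have h2 : IsEmpty {g : G // Φ g = t} := by
        refine ⟨fun g => ht ?_⟩
        have : LinearIndependent F (⇑(Matrix.toLin' (g.1 : Matrix (Fin n) (Fin n) F)) ∘ v₀) :=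
          hv₀li.map' _ (LinearMap.ker_eq_bot.mpr (SL_inj g.1))
        rw [← g.2]
        exact this
      rw [Fintype.card_eq_zero, Fintype.card_eq_zero]
  have hub : ∑ t : Fin m → Fin n → F, Fintype.card {g : G // Q g t} = Fintype.card G := by
    rw [Finset.sum_congr rfl fun t _ => hfib t, ← Fintype.card_sigma,
      Fintype.card_congr (Equiv.sigmaFiberEquiv Φ)]
  calc Fintype.card {g : G // m ≤ finrank F (LinearMap.ker
        (Matrix.toLin' (g : Matrix (Fin n) (Fin n) F) - LinearMap.id))} * P
      ≤ Fintype.card {p : G × (Fin m → Fin n → F) // Q p.1 p.2} := hlb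
    _ = ∑ t : Fin m → Fin n → F, Fintype.card {g : G // Q g t} := hpair2
    _ = Fintype.card G := hub

lemma prod_one_sub_lb (q : ℝ) (hq : 2 ≤ q) : ∀ m : ℕ, 1 ≤ m →
    1/4 + (q^m)⁻¹/2 ≤ ∏ i ∈ Finset.range m, (1 - (q^(i+1))⁻¹) := by
  have hq0 : (0:ℝ) < q := by linarith
  intro m hm
  induction m, hm using Nat.le_induction with
  | base =>
    have h2 : q⁻¹ ≤ 2⁻¹ := by
      apply inv_anti₀ <;> linarith
    simp only [Finset.prod_range_one, pow_one, zero_add]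
    norm_num at h2 ⊢
    linarith
  | succ m hm ih =>
    rw [Finset.prod_range_succ]
    have hx0 : (0:ℝ) < (q^m)⁻¹ := by positivity
    have hy0 : (0:ℝ) < (q^(m+1))⁻¹ := by positivity
    have hxy : (q^(m+1))⁻¹ * q = (q^m)⁻¹ := by
      rw [pow_succ, mul_inv]
      field_simp
    have hx2 : (q^m)⁻¹ ≤ 1/2 := by
      have h1 : (2:ℝ) ≤ q^m := le_trans hq (le_self_pow₀ (by linarith) (by omega))
      have h2 : (q^m)⁻¹ ≤ (2:ℝ)⁻¹ := inv_anti₀ (by norm_num) h1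
      norm_num at h2 ⊢
      linarith
    have hy1 : (q^(m+1))⁻¹ ≤ 1/2 := by
      nlinarith
    have h1 : (1/4 + (q^m)⁻¹/2) * (1 - (q^(m+1))⁻¹)
        ≤ (∏ i ∈ Finset.range m, (1 - (q^(i+1))⁻¹)) * (1 - (q^(m+1))⁻¹) :=
      mul_le_mul_of_nonneg_right ih (by linarith)
    have key : 1/4 + (q^(m+1))⁻¹/2 ≤ (1/4 + (q^m)⁻¹/2) * (1 - (q^(m+1))⁻¹) := by
      nlinarith [mul_le_mul_of_nonneg_right hq hy0.le, mul_pos hy0 hy0]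
    linarith

lemma prod_pow_lb (q : ℕ) (hq : 2 ≤ q) (m : ℕ) (hm : 1 ≤ m) :
    ((q:ℝ)) ^ (m^2) ≤ 4 * ∏ i : Fin m, ((q:ℝ)^m - (q:ℝ)^(i:ℕ)) := by
  have hqR : (2:ℝ) ≤ (q:ℝ) := by exact_mod_cast hq
  have hq0 : (0:ℝ) < (q:ℝ) := by linarith
  rw [Fin.prod_univ_eq_prod_range (fun i => ((q:ℝ)^m - (q:ℝ)^i)) m,
    ← Finset.prod_range_reflect]
  have hfact : ∀ i ∈ Finset.range m,
      (q:ℝ)^m - (q:ℝ)^(m - 1 - i) = (q:ℝ)^m * (1 - ((q:ℝ)^(i+1))⁻¹) := by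
    intro i hi
    have him : i < m := Finset.mem_range.mp hi
    have hsplit : (q:ℝ)^m = (q:ℝ)^(m-1-i) * (q:ℝ)^(i+1) := by
      rw [← pow_add]; congr 1; omega
    rw [mul_sub, mul_one]
    congr 1
    rw [hsplit, mul_assoc, mul_inv_cancel₀ (by positivity), mul_one]
  rw [Finset.prod_congr rfl hfact, Finset.prod_mul_distrib, Finset.prod_const,
    Finset.card_range, ← pow_mul, ← pow_two]
  have hprod : 1/4 ≤ ∏ i ∈ Finset.range m, (1 - ((q:ℝ)^(i+1))⁻¹) := by
    have h := prod_one_sub_lb (q:ℝ) hqR m hm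
    have : (0:ℝ) < ((q:ℝ)^m)⁻¹ := by positivity
    linarith
  nlinarith [pow_pos hq0 (m^2), mul_le_mul_of_nonneg_left hprod (pow_pos hq0 (m^2)).le]

end SLcountAux

set_option maxHeartbeats 1000000 in
/-- the number of elements of `SL_n(F_q)` whose fixed subspace has
dimension at least `m` is strictly less than `16 * q^(-m²) * |SL_n(F_q)|`. -/
theorem stmt_4 (F : Type*) [Field F] [Fintype F] [DecidableEq F]
    (n m : ℕ) (hn : 2 ≤ n) (hm1 : 1 ≤ m) (hm2 : m ≤ n - 1) :
    (Nat.card {g : Matrix.SpecialLinearGroup (Fin n) F |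
        m ≤ Module.finrank F (LinearMap.ker
          (Matrix.toLin' (g : Matrix (Fin n) (Fin n) F) - LinearMap.id))} : ℝ) <
      16 * (Fintype.card F : ℝ) ^ (-(m ^ 2 : ℤ)) *
        Nat.card (Matrix.SpecialLinearGroup (Fin n) F) := by
  classical
  have hmlt : m < n := by omega
  set q := Fintype.card F with hq
  have hq2 : 2 ≤ q := Fintype.one_lt_card
  have key := count_key F hmlt
  set P : ℕ := ∏ i : Fin m, (q ^ m - q ^ (i : ℕ)) with hP
  have hPcast : (P:ℝ) = ∏ i : Fin m, ((q:ℝ)^m - (q:ℝ)^(i:ℕ)) := by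
    rw [hP, Nat.cast_prod]
    refine Finset.prod_congr rfl fun i _ => ?_
    rw [Nat.cast_sub (Nat.pow_le_pow_right (by omega) (le_of_lt i.2))]
    push_cast; ring
  have hP4 : ((q:ℝ))^(m^2) ≤ 4 * (P:ℝ) := by rw [hPcast]; exact prod_pow_lb q hq2 m hm1
  have hNS : (Nat.card {g : Matrix.SpecialLinearGroup (Fin n) F |
        m ≤ Module.finrank F (LinearMap.ker
          (Matrix.toLin' (g : Matrix (Fin n) (Fin n) F) - LinearMap.id))})
      = Fintype.card {g : Matrix.SpecialLinearGroup (Fin n) F //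
        m ≤ Module.finrank F (LinearMap.ker
          (Matrix.toLin' (g : Matrix (Fin n) (Fin n) F) - LinearMap.id))} :=
    Nat.card_eq_fintype_card
  have hNG : Nat.card (Matrix.SpecialLinearGroup (Fin n) F)
      = Fintype.card (Matrix.SpecialLinearGroup (Fin n) F) := Nat.card_eq_fintype_card
  have hGpos : 0 < Fintype.card (Matrix.SpecialLinearGroup (Fin n) F) := Fintype.card_pos
  rw [hNS, hNG]
  have hT : (0:ℝ) < (q:ℝ)^(m^2) := by positivity
  have hzp : ((q:ℝ)) ^ (-(m^2 : ℤ)) = (((q:ℝ))^(m^2 : ℕ))⁻¹ := by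
    rw [_root_.zpow_neg]
    congr 1
  rw [hzp, show (16:ℝ) * ((q:ℝ)^(m^2:ℕ))⁻¹ * (Fintype.card (Matrix.SpecialLinearGroup (Fin n) F) : ℝ)
      = 16 * (Fintype.card (Matrix.SpecialLinearGroup (Fin n) F) : ℝ) / ((q:ℝ)^(m^2:ℕ)) by ring,
    lt_div_iff₀ hT]
  have keyR : (Fintype.card {g : Matrix.SpecialLinearGroup (Fin n) F //
        m ≤ Module.finrank F (LinearMap.ker
          (Matrix.toLin' (g : Matrix (Fin n) (Fin n) F) - LinearMap.id))} : ℝ) * (P:ℝ)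
      ≤ (Fintype.card (Matrix.SpecialLinearGroup (Fin n) F) : ℝ) := by
    exact_mod_cast key
  have hNS0 : (0:ℝ) ≤ (Fintype.card {g : Matrix.SpecialLinearGroup (Fin n) F //
        m ≤ Module.finrank F (LinearMap.ker
          (Matrix.toLin' (g : Matrix (Fin n) (Fin n) F) - LinearMap.id))} : ℝ) := by positivity
  have hNG1 : (1:ℝ) ≤ (Fintype.card (Matrix.SpecialLinearGroup (Fin n) F) : ℝ) := by
    exact_mod_cast hGpos
  nlinarith [mul_le_mul_of_nonneg_left hP4 hNS0]
end

section
/- Let m be a fixed positive integer and a a fixed integer. Then the proportion of permutations σ in the symmetric group S_n satisfying p(σ) ≡ a (mod m) tends to 1/m as n → ∞; that is, |{σ ∈ S_n : p(σ) ≡ a (mod m)}| / n! → 1/m as n → ∞. -/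
open Equiv Equiv.Perm Finset Filter Real

/-- The number of cycles of a permutation `σ` of a finite type, i.e. the number
of orbits of the cyclic group `⟨σ⟩` (fixed points count as cycles of length 1). -/
noncomputable def cycleCount {α : Type*} [Fintype α] (σ : Equiv.Perm α) : ℕ :=
  Nat.card (Quotient (MulAction.orbitRel (Subgroup.zpowers σ) α))

lemma invariant_zpow {α : Type*} {β : Type*} {σ : Equiv.Perm α} {f : α → β}
    (hf : f ∘ σ = f) (j : ℤ) (x : α) : f ((σ ^ j) x) = f x := by
  have hn : ∀ (k : ℕ) (y : α), f ((σ ^ k) y) = f y := by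
    intro k
    induction k with
    | zero => simp
    | succ k ih =>
      intro y
      rw [pow_succ, Equiv.Perm.mul_apply, ih]
      exact congrFun hf y
  obtain ⟨k, hk | hk⟩ := Int.eq_nat_or_neg j <;> subst hk
  · rw [zpow_natCast]; exact hn k x
  · rw [zpow_neg, zpow_natCast]
    conv_rhs => rw [← (show (σ ^ k) ((σ ^ k)⁻¹ x) = x from Equiv.apply_symm_apply _ _)]
    exact (hn k _).symm

/-- The invariant functions into `β` are in bijection with functions on the orbit space. -/
noncomputable def invariantEquiv {α : Type*} {β : Type*} [Fintype α] (σ : Equiv.Perm α) :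
    {f : α → β // f ∘ σ = f} ≃
      (Quotient (MulAction.orbitRel (Subgroup.zpowers σ) α) → β) where
  toFun := fun ⟨f, hf⟩ => Quotient.lift f (by
    intro x y h
    obtain ⟨⟨g, j, hg⟩, hgy⟩ := h
    subst hg
    have : (σ ^ j) y = x := hgy
    rw [← this]
    exact invariant_zpow hf j y)
  invFun := fun g => ⟨g ∘ Quotient.mk _, by
    funext x
    show g (Quotient.mk _ (σ x)) = g (Quotient.mk _ x)
    congr 1
    apply Quotient.sound
    exact ⟨⟨σ, Subgroup.mem_zpowers σ⟩, rfl⟩⟩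
  left_inv := fun ⟨f, hf⟩ => rfl
  right_inv := fun g => by
    funext q
    induction q using Quotient.inductionOn with
    | h x => rfl

lemma card_invariant {α : Type*} {β : Type*} [Fintype α] [Finite β] (σ : Equiv.Perm α) :
    Nat.card {f : α → β // f ∘ σ = f} = Nat.card β ^ cycleCount σ := by
  rw [Nat.card_congr (invariantEquiv σ), Nat.card_fun]
  rfl

section K
variable {n : ℕ} {β : Type*}

/-- invariant functions for the extension fixing `0`. -/
def equivZero (e : Perm (Fin n)) :
    {f : Fin (n + 1) → β // f ∘ (Equiv.Perm.decomposeFin.symm (0, e)) = f} ≃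
      β × {g : Fin n → β // g ∘ e = g} where
  toFun := fun ⟨f, hf⟩ => ⟨f 0, f ∘ Fin.succ, by
    funext x
    have := congrFun hf x.succ
    simpa [Equiv.Perm.decomposeFin_symm_apply_succ] using this⟩
  invFun := fun ⟨b, g, hg⟩ => ⟨Fin.cases b g, by
    funext x
    induction x using Fin.cases with
    | zero => simp [Equiv.Perm.decomposeFin_symm_apply_zero]
    | succ y =>
      simp only [Function.comp_apply, Equiv.Perm.decomposeFin_symm_apply_succ]
      simp only [Equiv.swap_self, Equiv.refl_apply, Fin.cases_succ]
      exact congrFun hg y⟩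
  left_inv := fun ⟨f, hf⟩ => by
    ext x
    induction x using Fin.cases with
    | zero => simp
    | succ y => simp
  right_inv := fun ⟨b, g, hg⟩ => by
    refine Prod.ext (by simp) (Subtype.ext ?_)
    funext y
    simp

/-- invariant functions when `0` is spliced into the cycle of `q.succ`. -/
def equivSucc (e : Perm (Fin n)) (q : Fin n) :
    {f : Fin (n + 1) → β // f ∘ (Equiv.Perm.decomposeFin.symm (q.succ, e)) = f} ≃
      {g : Fin n → β // g ∘ e = g} where
  toFun := fun ⟨f, hf⟩ => ⟨f ∘ Fin.succ, by
    have h0 : f q.succ = f 0 := by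
      have := congrFun hf 0
      simpa [Equiv.Perm.decomposeFin_symm_apply_zero] using this
    funext x
    have hx := congrFun hf x.succ
    rw [Function.comp_apply, Equiv.Perm.decomposeFin_symm_apply_succ] at hx
    by_cases h : e x = q
    · rw [h, Equiv.swap_apply_right] at hx
      simp only [Function.comp_apply, h]
      rw [h0, hx]
    · rw [Equiv.swap_apply_of_ne_of_ne (Fin.succ_ne_zero _) (by simpa using h)] at hx
      exact hx⟩
  invFun := fun ⟨g, hg⟩ => ⟨Fin.cases (g q) g, by
    funext x
    induction x using Fin.cases with
    | zero => simp [Equiv.Perm.decomposeFin_symm_apply_zero]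
    | succ y =>
      simp only [Function.comp_apply, Equiv.Perm.decomposeFin_symm_apply_succ]
      by_cases h : e y = q
      · rw [h, Equiv.swap_apply_right]
        simp [← congrFun hg y, h]
      · rw [Equiv.swap_apply_of_ne_of_ne (Fin.succ_ne_zero _) (by simpa using h)]
        simp only [Fin.cases_succ]
        exact congrFun hg y⟩
  left_inv := fun ⟨f, hf⟩ => by
    have h0 : f q.succ = f 0 := by
      have := congrFun hf 0
      simpa [Equiv.Perm.decomposeFin_symm_apply_zero] using this
    ext x
    induction x using Fin.cases with
    | zero => simpa using h0
    | succ y => simp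
  right_inv := fun ⟨g, hg⟩ => by
    apply Subtype.ext
    funext y
    simp

lemma cycleCount_decomposeFin (p : Fin (n + 1)) (e : Perm (Fin n)) :
    cycleCount (Equiv.Perm.decomposeFin.symm (p, e)) =
      cycleCount e + (if p = 0 then 1 else 0) := by
  have key : (2 : ℕ) ^ cycleCount (Equiv.Perm.decomposeFin.symm (p, e)) =
      2 ^ (cycleCount e + (if p = 0 then 1 else 0)) := by
    have h1 := card_invariant (β := Bool) (Equiv.Perm.decomposeFin.symm (p, e))
    simp only [Nat.card_eq_fintype_card, Fintype.card_bool] at h1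
    induction p using Fin.cases with
    | zero =>
      rw [← h1, ← Nat.card_eq_fintype_card, Nat.card_congr (equivZero e), Nat.card_prod,
        card_invariant (β := Bool) e]
      simp only [Nat.card_eq_fintype_card, Fintype.card_bool]
      simp [pow_succ, pow_add, mul_comm]
    | succ q =>
      rw [← h1, ← Nat.card_eq_fintype_card, Nat.card_congr (equivSucc e q),
        card_invariant (β := Bool) e]
      simp only [Nat.card_eq_fintype_card, Fintype.card_bool]
      simp [Fin.succ_ne_zero]
  exact Nat.pow_right_injective le_rfl key

end K

lemma sum_pow_cycleCount (n : ℕ) (x : ℂ) :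
    ∑ σ : Perm (Fin n), x ^ cycleCount σ = ∏ i ∈ range n, (x + i) := by
  induction n with
  | zero =>
    have he : IsEmpty (Quotient (MulAction.orbitRel (Subgroup.zpowers (1 : Perm (Fin 0))) (Fin 0))) :=
      by infer_instance
    rw [Finset.range_zero, Finset.prod_empty]
    rw [Fintype.sum_eq_single (1 : Perm (Fin 0)) (fun σ h => absurd (Subsingleton.elim σ 1) h)]
    rw [show cycleCount (1 : Perm (Fin 0)) = 0 from Nat.card_of_isEmpty, pow_zero]
  | succ n ih =>
    rw [← Equiv.sum_comp (Equiv.Perm.decomposeFin (n := n)).symm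
      (fun σ : Perm (Fin (n + 1)) => x ^ cycleCount σ)]
    rw [Fintype.sum_prod_type]
    have : ∀ (p : Fin (n + 1)) (e : Perm (Fin n)),
        x ^ cycleCount (Equiv.Perm.decomposeFin.symm (p, e)) =
          (if p = 0 then x else 1) * x ^ cycleCount e := by
      intro p e
      rw [cycleCount_decomposeFin, pow_add]
      by_cases h : p = 0 <;> simp [h, mul_comm]
    simp_rw [this]
    rw [Finset.prod_range_succ, ← ih]
    rw [Finset.sum_comm]
    have hsum : ∑ p : Fin (n + 1), (if p = 0 then x else (1 : ℂ)) = x + n := by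
      rw [Fin.sum_univ_succ]
      simp [Fin.succ_ne_zero]
    simp_rw [← Finset.sum_mul, hsum]
    rw [← Finset.mul_sum, mul_comm]

lemma harmonic_half_le : ∀ n : ℕ,
    (∑ i ∈ range n, (1 : ℝ) / (i + 1)) / 2 - 1 / 2 ≤ ∑ i ∈ range n, (i : ℝ) / ((i : ℝ) + 1) ^ 2 := by
  have key : ∀ n : ℕ, (∑ i ∈ range n, (1 : ℝ) / (i + 1)) / 2 ≤
      1 / 2 + ∑ i ∈ range n, (i : ℝ) / ((i : ℝ) + 1) ^ 2 := by
    intro n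
    induction n with
    | zero => norm_num
    | succ n ih =>
      rw [Finset.sum_range_succ, Finset.sum_range_succ, add_div]
      rcases Nat.eq_zero_or_pos n with hn | hn
      · subst hn; norm_num
      · have h1 : (1 : ℝ) / (↑n + 1) / 2 ≤ (n : ℝ) / ((n : ℝ) + 1) ^ 2 := by
          rw [div_div, div_le_div_iff₀ (by positivity) (by positivity)]
          have : (1 : ℝ) ≤ n := by exact_mod_cast hn
          nlinarith
        linarith
  intro n
  linarith [key n]

lemma prod_tendsto_zero (z : ℂ) (hz : ‖z‖ = 1) (hz1 : z ≠ 1) :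
    Tendsto (fun n : ℕ => ∏ i ∈ range n, ((z + i) / ((i : ℂ) + 1))) atTop (nhds 0) := by
  have hre : z.re < 1 := by
    rcases lt_or_eq_of_le (le_trans (Complex.re_le_norm z) hz.le) with h | h
    · exact h
    · exfalso
      apply hz1
      have hsq : Complex.normSq z = 1 := by
        rw [← Complex.sq_norm, hz]; norm_num
      have : z.im ^ 2 = 0 := by
        have := Complex.normSq_apply z
        nlinarith [this, hsq, h]
      apply Complex.ext
      · exact h
      · simpa using pow_eq_zero_iff (n := 2) (by norm_num) |>.mp this
  set c : ℝ := 1 - z.re with hc_def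
  have hc : 0 < c := by simp [hc_def]; linarith
  -- norm of each factor
  have hbound : ∀ i : ℕ, ‖(z + i) / ((i : ℂ) + 1)‖ ≤
      Real.exp (-(c * ((i : ℝ) / ((i : ℝ) + 1) ^ 2))) := by
    intro i
    have hpos : (0 : ℝ) < (i : ℝ) + 1 := by positivity
    have habs2 : (‖(z + i) / ((i : ℂ) + 1)‖) ^ 2 =
        1 - 2 * c * ((i : ℝ) / ((i : ℝ) + 1) ^ 2) := by
      rw [norm_div, div_pow, Complex.sq_norm, Complex.sq_norm]
      have h1 : Complex.normSq ((i : ℂ) + 1) = ((i : ℝ) + 1) ^ 2 := by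
        simp [Complex.normSq_apply]; ring
      have h2 : Complex.normSq (z + i) = (z.re + i) ^ 2 + z.im ^ 2 := by
        simp [Complex.normSq_apply]; ring
      have h3 : z.re ^ 2 + z.im ^ 2 = 1 := by
        have : Complex.normSq z = 1 := by rw [← Complex.sq_norm, hz]; norm_num
        rw [← this]; simp [Complex.normSq_apply]; ring
      rw [h1, h2]
      field_simp
      nlinarith [h3]
    have hE : Real.exp (-(c * ((i : ℝ) / ((i : ℝ) + 1) ^ 2))) ^ 2 =
        Real.exp (-(2 * c * ((i : ℝ) / ((i : ℝ) + 1) ^ 2))) := by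
      rw [← Real.exp_nat_mul]; ring_nf
    have hle2 : (‖(z + i) / ((i : ℂ) + 1)‖) ^ 2 ≤
        Real.exp (-(c * ((i : ℝ) / ((i : ℝ) + 1) ^ 2))) ^ 2 := by
      rw [habs2, hE]
      have := Real.add_one_le_exp (-(2 * c * ((i : ℝ) / ((i : ℝ) + 1) ^ 2)))
      linarith
    have h0 : (0 : ℝ) ≤ ‖(z + i) / ((i : ℂ) + 1)‖ := norm_nonneg _
    have h0' : (0 : ℝ) ≤ Real.exp (-(c * ((i : ℝ) / ((i : ℝ) + 1) ^ 2))) := (Real.exp_pos _).le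
    nlinarith [hle2, h0, h0']
  -- the product of the bounds
  have hprodbound : ∀ n : ℕ, ‖∏ i ∈ range n, ((z + i) / ((i : ℂ) + 1))‖ ≤
      Real.exp (-(c * ∑ i ∈ range n, ((i : ℝ) / ((i : ℝ) + 1) ^ 2))) := by
    intro n
    rw [norm_prod]
    have : Real.exp (-(c * ∑ i ∈ range n, ((i : ℝ) / ((i : ℝ) + 1) ^ 2))) =
        ∏ i ∈ range n, Real.exp (-(c * ((i : ℝ) / ((i : ℝ) + 1) ^ 2))) := by
      rw [← Real.exp_sum]
      congr 1
      rw [Finset.mul_sum, ← Finset.sum_neg_distrib]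
    rw [this]
    exact Finset.prod_le_prod (fun i _ => norm_nonneg _) (fun i _ => hbound i)
  -- sum tends to infinity
  have hT : Tendsto (fun n : ℕ => ∑ i ∈ range n, ((i : ℝ) / ((i : ℝ) + 1) ^ 2)) atTop atTop := by
    apply tendsto_atTop_mono harmonic_half_le
    have h1 : Tendsto (fun n : ℕ => (∑ i ∈ range n, (1 : ℝ) / (i + 1)) / 2) atTop atTop :=
      Filter.Tendsto.atTop_div_const two_pos tendsto_sum_range_one_div_nat_succ_atTop
    have h2 := tendsto_atTop_add_const_right atTop (-(1/2 : ℝ)) h1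
    exact h2.congr (fun n => by ring)
  have hexp : Tendsto (fun n : ℕ => Real.exp (-(c * ∑ i ∈ range n, ((i : ℝ) / ((i : ℝ) + 1) ^ 2))))
      atTop (nhds 0) := by
    apply Real.tendsto_exp_atBot.comp
    have h3 : Tendsto (fun n : ℕ => c * ∑ i ∈ range n, ((i : ℝ) / ((i : ℝ) + 1) ^ 2))
        atTop atTop := Filter.Tendsto.const_mul_atTop hc hT
    exact tendsto_neg_atBot_iff.mpr h3
  rw [tendsto_zero_iff_norm_tendsto_zero]
  apply squeeze_zero (fun n => norm_nonneg _) (fun n => hprodbound n) hexp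

/-- for fixed `m ≥ 1` and `a`, the proportion of permutations
`σ ∈ S_n` with `p(σ) ≡ a (mod m)` tends to `1/m` as `n → ∞`. -/
theorem stmt_8 (m : ℕ) (hm : 0 < m) (a : ℤ) :
    Filter.Tendsto
      (fun n : ℕ =>
        (Nat.card {σ : Equiv.Perm (Fin n) // (cycleCount σ : ℤ) ≡ a [ZMOD (m : ℤ)]} : ℝ) /
          (Nat.factorial n : ℝ))
      Filter.atTop (nhds (1 / (m : ℝ))) := by
  set ω : ℂ := Complex.exp (2 * Real.pi * Complex.I / m) with hω_def
  have hprim : IsPrimitiveRoot ω m := Complex.isPrimitiveRoot_exp m hm.ne'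
  have hω0 : ω ≠ 0 := Complex.exp_ne_zero _
  have hωm : ω ^ m = 1 := hprim.pow_eq_one
  have hm0 : (m : ℂ) ≠ 0 := Nat.cast_ne_zero.mpr hm.ne'
  -- indicator identity
  have hind : ∀ k : ℤ, ∑ t ∈ range m, (ω ^ k) ^ t =
      (if (m : ℤ) ∣ k then (m : ℂ) else 0) := by
    intro k
    by_cases hd : ω ^ k = 1
    · rw [if_pos ((hprim.zpow_eq_one_iff_dvd k).mp hd), Finset.sum_congr rfl
        (fun t _ => by rw [hd, one_pow])]
      simp
    · rw [if_neg (fun hdvd => hd ((hprim.zpow_eq_one_iff_dvd k).mpr hdvd))]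
      rw [geom_sum_eq hd]
      have : (ω ^ k) ^ m = 1 := by
        rw [← zpow_natCast (ω ^ k) m, ← zpow_mul, mul_comm, zpow_mul, zpow_natCast, hωm,
          one_zpow]
      rw [this, sub_self, zero_div]
  -- count identity
  have hcount : ∀ n : ℕ,
      ((Nat.card {σ : Equiv.Perm (Fin n) // (cycleCount σ : ℤ) ≡ a [ZMOD (m : ℤ)]} : ℂ)) =
        (1 / m) * ∑ t ∈ range m, ω ^ (-(t : ℤ) * a) * ∏ i ∈ range n, (ω ^ (t : ℤ) + i) := by
    intro n
    have key : (m : ℂ) *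
        (Nat.card {σ : Equiv.Perm (Fin n) // (cycleCount σ : ℤ) ≡ a [ZMOD (m : ℤ)]} : ℂ) =
        ∑ t ∈ range m, ω ^ (-(t : ℤ) * a) * ∏ i ∈ range n, (ω ^ (t : ℤ) + i) := by
      classical
      rw [Nat.card_eq_fintype_card, Fintype.card_subtype]
      push_cast
      rw [Finset.card_eq_sum_ones, Nat.cast_sum, Finset.sum_filter, Finset.mul_sum]
      have hterm : ∀ σ : Perm (Fin n),
          (m : ℂ) * (if (cycleCount σ : ℤ) ≡ a [ZMOD (m : ℤ)] then ((1 : ℕ) : ℂ) else 0) =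
            ∑ t ∈ range m, (ω ^ ((cycleCount σ : ℤ) - a)) ^ t := by
        intro σ
        rw [hind ((cycleCount σ : ℤ) - a)]
        have : (cycleCount σ : ℤ) ≡ a [ZMOD (m : ℤ)] ↔ (m : ℤ) ∣ ((cycleCount σ : ℤ) - a) :=
          ⟨fun h => h.symm.dvd, fun hd => (Int.modEq_iff_dvd.mpr hd).symm⟩
        by_cases h : (cycleCount σ : ℤ) ≡ a [ZMOD (m : ℤ)]
        · rw [if_pos h, if_pos (this.mp h)]; simp
        · rw [if_neg h, if_neg (fun hd => h (this.mpr hd))]; simp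
      rw [Finset.sum_congr rfl (fun σ _ => hterm σ), Finset.sum_comm]
      apply Finset.sum_congr rfl
      intro t _
      have hsplit : ∀ σ : Perm (Fin n),
          (ω ^ ((cycleCount σ : ℤ) - a)) ^ t =
            ω ^ (-(t : ℤ) * a) * (ω ^ (t : ℤ)) ^ cycleCount σ := by
        intro σ
        rw [← zpow_natCast (ω ^ ((cycleCount σ : ℤ) - a)) t, ← zpow_mul, ← zpow_natCast
          (ω ^ (t : ℤ)) (cycleCount σ), ← zpow_mul, ← zpow_add₀ hω0]
        congr 1
        ring
      rw [Finset.sum_congr rfl (fun σ _ => hsplit σ), ← Finset.mul_sum,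
        sum_pow_cycleCount n (ω ^ (t : ℤ))]
    rw [← key, one_div]
    exact (inv_mul_cancel_left₀ hm0 _).symm
  -- ratio identity
  have habsω : ‖ω‖ = 1 := by
    have := Complex.norm_eq_one_of_pow_eq_one hωm hm.ne'
    simpa using this
  have hratio : ∀ n : ℕ,
      ((Nat.card {σ : Equiv.Perm (Fin n) // (cycleCount σ : ℤ) ≡ a [ZMOD (m : ℤ)]} : ℂ)) /
        ((Nat.factorial n : ℕ) : ℂ) =
      (1 / m) * ∑ t ∈ range m, ω ^ (-(t : ℤ) * a) *
        ∏ i ∈ range n, ((ω ^ (t : ℤ) + i) / ((i : ℂ) + 1)) := by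
    intro n
    have hfact : ((Nat.factorial n : ℕ) : ℂ) = ∏ i ∈ range n, ((i : ℂ) + 1) := by
      rw [← Finset.prod_range_add_one_eq_factorial]
      push_cast
      rfl
    rw [hcount n, mul_div_assoc, Finset.sum_div]
    congr 1
    apply Finset.sum_congr rfl
    intro t _
    rw [mul_div_assoc, Finset.prod_div_distrib, hfact]
  -- complex convergence
  have hzero : (0 : ℕ) ∈ range m := Finset.mem_range.mpr hm
  have hCtend : Tendsto (fun n : ℕ =>
      ((Nat.card {σ : Equiv.Perm (Fin n) // (cycleCount σ : ℤ) ≡ a [ZMOD (m : ℤ)]} : ℂ)) /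
        ((Nat.factorial n : ℕ) : ℂ)) atTop (nhds (1 / (m : ℂ))) := by
    have hsum : Tendsto (fun n : ℕ => ∑ t ∈ range m, ω ^ (-(t : ℤ) * a) *
        ∏ i ∈ range n, ((ω ^ (t : ℤ) + i) / ((i : ℂ) + 1))) atTop
        (nhds (∑ t ∈ range m, if t = 0 then (1 : ℂ) else 0)) := by
      apply tendsto_finset_sum
      intro t ht
      by_cases h0 : t = 0
      · subst h0
        rw [if_pos rfl]
        have hone : ∀ n : ℕ, ω ^ (-(0 : ℤ) * a) *
            ∏ i ∈ range n, ((ω ^ ((0 : ℕ) : ℤ) + i) / ((i : ℂ) + 1)) = 1 := by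
          intro n
          have : ∀ i ∈ range n, (ω ^ ((0 : ℕ) : ℤ) + (i : ℂ)) / ((i : ℂ) + 1) = 1 := by
            intro i _
            rw [Nat.cast_zero, zpow_zero, add_comm]
            exact div_self (Nat.cast_add_one_ne_zero i)
          rw [Finset.prod_congr rfl this, Finset.prod_const_one]
          simp
        exact tendsto_const_nhds.congr (fun n => (hone n).symm)
      · rw [if_neg h0]
        have habsz : ‖ω ^ (t : ℤ)‖ = 1 := by
          rw [zpow_natCast, norm_pow, habsω, one_pow]
        have hz1 : ω ^ (t : ℤ) ≠ 1 := by
          rw [zpow_natCast]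
          exact hprim.pow_ne_one_of_pos_of_lt h0 (Finset.mem_range.mp ht)
        have := (prod_tendsto_zero (ω ^ (t : ℤ)) habsz hz1).const_mul (ω ^ (-(t : ℤ) * a))
        rw [mul_zero] at this
        exact this
    have hsumval : (∑ t ∈ range m, if t = 0 then (1 : ℂ) else 0) = 1 := by
      rw [Finset.sum_ite_eq' (range m) 0 (fun _ => (1 : ℂ))]
      simp [hzero]
    rw [hsumval] at hsum
    have := hsum.const_mul (1 / (m : ℂ))
    rw [mul_one] at this
    exact this.congr (fun n => (hratio n).symm)
  -- pass to the reals
  have hcast : ((1 / (m : ℝ) : ℝ) : ℂ) = 1 / (m : ℂ) := by push_cast; ring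
  rw [← Filter.tendsto_ofReal_iff, hcast]
  apply hCtend.congr
  intro n
  push_cast
  ring
end

section
/- Let n ≥ 5, let D(A_n) denote the set of derangements in the alternating group A_n (even permutations of {1,…,n} with no fixed points), and let σ ∈ A_n be any 3-cycle. Then the number of derangements τ ∈ D(A_n) such that τσ is again a derangement is at least (1 − 3/(n−1))·|D(A_n)|. -/
open Equiv Finset

private def Dset (n : ℕ) : Finset (Equiv.Perm (Fin n)) :=
  univ.filter fun τ => Equiv.Perm.sign τ = 1 ∧ ∀ x, τ x ≠ x

private lemma fiber_eq {n : ℕ} {u v v' : Fin n} (hv : v ≠ u) (hv' : v' ≠ u) :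
    ((Dset n).filter fun τ => τ u = v).card
      = ((Dset n).filter fun τ => τ u = v').card := by
  set π := Equiv.swap v v' with hπ
  have hππ : π * π = 1 := Equiv.swap_mul_self v v'
  have hπu : π u = u := Equiv.swap_apply_of_ne_of_ne (Ne.symm hv) (Ne.symm hv')
  have hπinv : π⁻¹ = π := Equiv.swap_inv v v'
  have hmem : ∀ τ : Equiv.Perm (Fin n), τ ∈ Dset n → π * τ * π ∈ Dset n := by
    intro τ hτ
    simp only [Dset, mem_filter, mem_univ, true_and] at hτ ⊢
    obtain ⟨hA, hD⟩ := hτ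
    have hs : Equiv.Perm.sign π * Equiv.Perm.sign π = 1 := by
      rw [← map_mul, hππ, map_one]
    constructor
    · rw [map_mul, map_mul, hA, mul_one, hs]
    · intro x hx
      have hx' : π (π (τ (π x))) = π x := congrArg π hx
      have : τ (π x) = π x := by
        have h2 : π (π (τ (π x))) = τ (π x) := by
          rw [← Equiv.Perm.mul_apply π π, hππ]; rfl
        rw [h2] at hx'; exact hx'
      exact hD _ this
  have hval : ∀ τ : Equiv.Perm (Fin n), (π * τ * π) u = π (τ u) := by
    intro τ
    simp [Equiv.Perm.mul_apply, hπu]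
  have hinvol : ∀ τ : Equiv.Perm (Fin n), π * (π * τ * π) * π = τ := by
    intro τ
    have : π * (π * τ * π) * π = (π * π) * τ * (π * π) := by group
    rw [this, hππ, one_mul, mul_one]
  apply Finset.card_bij' (fun τ _ => π * τ * π) (fun τ _ => π * τ * π)
  · intro τ hτ
    simp only [mem_filter] at hτ ⊢
    exact ⟨hmem τ hτ.1, by rw [hval, hτ.2, hπ]; exact Equiv.swap_apply_left v v'⟩
  · intro τ hτ
    simp only [mem_filter] at hτ ⊢
    exact ⟨hmem τ hτ.1, by rw [hval, hτ.2, hπ]; exact Equiv.swap_apply_right v v'⟩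
  · intro τ _; exact hinvol τ
  · intro τ _; exact hinvol τ

private lemma card_D_eq {n : ℕ} {u v : Fin n} (hv : v ≠ u) :
    (Dset n).card = (n - 1) * ((Dset n).filter fun τ => τ u = v).card := by
  have h : (Dset n).card
      = ∑ w ∈ univ.erase u, ((Dset n).filter fun τ => τ u = w).card :=
    Finset.card_eq_sum_card_fiberwise (by
        intro τ hτ
        simp only [Dset, mem_coe, mem_filter] at hτ
        exact Finset.mem_erase.2 ⟨hτ.2.2 u, mem_univ _⟩)
  rw [h, Finset.sum_congr rfl (fun w hw => fiber_eq (Finset.ne_of_mem_erase hw) hv),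
    Finset.sum_const, smul_eq_mul, Finset.card_erase_of_mem (mem_univ u), card_univ,
    Fintype.card_fin]

/-- for `n ≥ 5` and a 3-cycle `σ ∈ A_n`, the number of
derangements `τ ∈ A_n` such that `τσ` is again a derangement is at least
`(1 - 3/(n-1))` times the number of derangements of `A_n`. -/
theorem stmt_12 (n : ℕ) (hn : 5 ≤ n) (σ : Equiv.Perm (Fin n))
    (hσA : σ ∈ alternatingGroup (Fin n)) (hσ3 : σ.IsThreeCycle) :
    (1 - 3 / ((n : ℝ) - 1)) *
        (Nat.card {τ : Equiv.Perm (Fin n) //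
          τ ∈ alternatingGroup (Fin n) ∧ ∀ x : Fin n, τ x ≠ x} : ℝ) ≤
      (Nat.card {τ : Equiv.Perm (Fin n) //
        (τ ∈ alternatingGroup (Fin n) ∧ ∀ x : Fin n, τ x ≠ x) ∧
        ∀ x : Fin n, (τ * σ) x ≠ x} : ℝ) := by
  classical
  have hD : Nat.card {τ : Equiv.Perm (Fin n) //
      τ ∈ alternatingGroup (Fin n) ∧ ∀ x : Fin n, τ x ≠ x} = (Dset n).card := by
    rw [Nat.card_eq_fintype_card, Fintype.card_subtype]
    congr 1
    ext τ
    simp [Dset, Equiv.Perm.mem_alternatingGroup]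
  set G : Finset (Equiv.Perm (Fin n)) :=
    (Dset n).filter (fun τ => ∀ x : Fin n, (τ * σ) x ≠ x) with hGdef
  have hG : Nat.card {τ : Equiv.Perm (Fin n) //
      (τ ∈ alternatingGroup (Fin n) ∧ ∀ x : Fin n, τ x ≠ x) ∧
      ∀ x : Fin n, (τ * σ) x ≠ x} = G.card := by
    rw [Nat.card_eq_fintype_card, Fintype.card_subtype]
    congr 1
    ext τ
    simp [Dset, hGdef, Finset.mem_filter, Equiv.Perm.mem_alternatingGroup, and_assoc]
  set B : Finset (Equiv.Perm (Fin n)) :=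
    (Dset n).filter (fun τ => ¬ ∀ x : Fin n, (τ * σ) x ≠ x) with hBdef
  have hGB : G.card + B.card = (Dset n).card :=
    Finset.card_filter_add_card_filter_not _
  -- bound on B
  have hBsub : B ⊆ σ.support.biUnion
      (fun x => (Dset n).filter fun τ => τ (σ x) = x) := by
    intro τ hτ
    simp only [hBdef, mem_filter, not_forall, not_not] at hτ
    obtain ⟨hτD, x, hx⟩ := hτ
    have hfix : τ (σ x) = x := by simpa [Equiv.Perm.mul_apply] using hx
    have hxs : x ∈ σ.support := by
      rw [Equiv.Perm.mem_support]
      intro h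
      have hτD' := hτD
      simp only [Dset, mem_filter] at hτD'
      rw [h] at hfix
      exact hτD'.2.2 x hfix
    exact Finset.mem_biUnion.2 ⟨x, hxs, Finset.mem_filter.2 ⟨hτD, hfix⟩⟩
  have hBle : B.card ≤ ∑ x ∈ σ.support, ((Dset n).filter fun τ => τ (σ x) = x).card :=
    le_trans (Finset.card_le_card hBsub) (Finset.card_biUnion_le)
  have hfibcard : ∀ x ∈ σ.support,
      (Dset n).card = (n - 1) * ((Dset n).filter fun τ => τ (σ x) = x).card := by
    intro x hx
    exact card_D_eq (Ne.symm (Equiv.Perm.mem_support.1 hx))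
  have hkey : (n - 1) * B.card ≤ 3 * (Dset n).card := by
    calc (n - 1) * B.card ≤ (n - 1) *
          ∑ x ∈ σ.support, ((Dset n).filter fun τ => τ (σ x) = x).card :=
            Nat.mul_le_mul_left _ hBle
      _ = ∑ x ∈ σ.support, (n - 1) * ((Dset n).filter fun τ => τ (σ x) = x).card := by
            rw [Finset.mul_sum]
      _ = ∑ x ∈ σ.support, (Dset n).card := by
            exact Finset.sum_congr rfl (fun x hx => (hfibcard x hx).symm)
      _ = 3 * (Dset n).card := by
            rw [Finset.sum_const, smul_eq_mul, hσ3.card_support]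
  -- real arithmetic
  rw [hD, hG]
  have hN : (4 : ℝ) ≤ (n : ℝ) - 1 := by
    have : (5 : ℝ) ≤ (n : ℝ) := by exact_mod_cast hn
    linarith
  have hNpos : (0 : ℝ) < (n : ℝ) - 1 := by linarith
  have hcast : ((n - 1 : ℕ) : ℝ) = (n : ℝ) - 1 := by
    have : 1 ≤ n := by omega
    push_cast [this]; ring
  have hkeyR : ((n : ℝ) - 1) * (B.card : ℝ) ≤ 3 * ((Dset n).card : ℝ) := by
    rw [← hcast]
    exact_mod_cast hkey
  have hGBR : (G.card : ℝ) + (B.card : ℝ) = ((Dset n).card : ℝ) := by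
    exact_mod_cast hGB
  rw [sub_mul, one_mul, div_mul_eq_mul_div, sub_le_iff_le_add]
  have hB' : (B.card : ℝ) ≤ 3 * ((Dset n).card : ℝ) / ((n : ℝ) - 1) := by
    rw [le_div_iff₀ hNpos]
    nlinarith [hkeyR]
  linarith [hGBR, hB']
end

section
/- For every n ≥ 5, every element of the alternating group A_n, in its natural action on {1, 2, …, n}, is a product of two derangements: for every g ∈ A_n there exist fixed-point-free permutations d₁, d₂ ∈ A_n with g = d₁d₂. -/
open Equiv Equiv.Perm Finset

private lemma fin5_two_cycle : ∀ c : Equiv.Perm (Fin 5), Equiv.Perm.sign c = -1 →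
    (∀ x, c x ≠ x) → ∃ p, c (c p) = p := by
  set_option maxRecDepth 10000 in decide

private lemma exists_avoiding (n : ℕ) (hn : 5 ≤ n) (g : Equiv.Perm (Fin n)) :
    ∃ c : Equiv.Perm (Fin n), ∀ x, c x ≠ x ∧ c x ≠ g x := by
  classical
  set t : Fin n → Finset (Fin n) := fun x => ({x, g x} : Finset (Fin n))ᶜ with ht
  have hall : ∀ s : Finset (Fin n), s.card ≤ (s.biUnion t).card := by
    intro s
    rcases s.eq_empty_or_nonempty with rfl | ⟨x, hx⟩
    · simp
    by_cases hs : s.card ≤ n - 2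
    · calc s.card ≤ n - 2 := hs
        _ ≤ (t x).card := by
            have hcx : (t x).card = n - ({x, g x} : Finset (Fin n)).card := by
              rw [ht]; rw [Finset.card_compl, Fintype.card_fin]
            have h2 : ({x, g x} : Finset (Fin n)).card ≤ 2 :=
              (Finset.card_insert_le _ _).trans (by simp)
            omega
        _ ≤ (s.biUnion t).card :=
            Finset.card_le_card (Finset.subset_biUnion_of_mem t hx)
    · push_neg at hs
      have huniv : s.biUnion t = Finset.univ := by
        apply Finset.eq_univ_of_forall
        intro v
        by_contra hv
        have hsub : s ⊆ ({v, g⁻¹ v} : Finset (Fin n)) := by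
          intro y hy
          have hvy : v ∉ t y := fun h => hv (Finset.mem_biUnion.2 ⟨y, hy, h⟩)
          rw [ht] at hvy
          simp only [Finset.mem_compl, not_not, Finset.mem_insert,
            Finset.mem_singleton] at hvy
          rcases hvy with h | h
          · simp [h]
          · have : y = g⁻¹ v := by rw [h]; simp
            simp [this]
        have hcard : s.card ≤ 2 :=
          (Finset.card_le_card hsub).trans ((Finset.card_insert_le _ _).trans (by simp))
        omega
      rw [huniv, Finset.card_univ, Fintype.card_fin]
      have := Finset.card_le_univ s
      simpa using this
  obtain ⟨f, hinj, hf⟩ := (Finset.all_card_le_biUnion_card_iff_exists_injective t).1 hall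
  refine ⟨Equiv.ofBijective f (Finite.injective_iff_bijective.1 hinj), fun x => ?_⟩
  have hfx := hf x
  rw [ht] at hfx
  simp only [Finset.mem_compl, Finset.mem_insert, Finset.mem_singleton, not_or] at hfx
  exact ⟨hfx.1, hfx.2⟩

/-- for `n ≥ 5`, every element of `A_n` (in its natural action on
`{1, …, n}`) is a product of two derangements in `A_n`. -/
theorem stmt_15 (n : ℕ) (hn : 5 ≤ n) :
    ∀ g ∈ alternatingGroup (Fin n),
      ∃ d₁ ∈ alternatingGroup (Fin n), ∃ d₂ ∈ alternatingGroup (Fin n),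
        (∀ x : Fin n, d₁ x ≠ x) ∧ (∀ x : Fin n, d₂ x ≠ x) ∧ g = d₁ * d₂ := by
  intro g hg
  rw [Equiv.Perm.mem_alternatingGroup] at hg
  obtain ⟨c, hc⟩ := exists_avoiding n hn g
  have hc1 : ∀ x, c x ≠ x := fun x => (hc x).1
  have hc2 : ∀ x, c x ≠ g x := fun x => (hc x).2
  have hd1 : ∀ x : Fin n, (g * c⁻¹) x ≠ x := by
    intro x h
    rw [Equiv.Perm.mul_apply] at h
    apply hc2 (c⁻¹ x)
    rw [show c (c⁻¹ x) = x from c.apply_symm_apply x, h]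
  rcases Int.units_eq_one_or (Equiv.Perm.sign c) with hsc | hsc
  · -- c is even: take d₁ = g * c⁻¹, d₂ = c
    refine ⟨g * c⁻¹, ?_, c, ?_, hd1, hc1, ?_⟩
    · rw [Equiv.Perm.mem_alternatingGroup, map_mul, map_inv, hg, hsc]
      decide
    · rw [Equiv.Perm.mem_alternatingGroup, hsc]
    · rw [inv_mul_cancel_right]
  · -- c is odd: fix parity with a transposition
    have key : ∃ a : Fin n,
        (insert a {c a, c⁻¹ a, c (g⁻¹ a), g (c⁻¹ a)} : Finset (Fin n)).card < n := by
      by_cases hn6 : 6 ≤ n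
      · refine ⟨⟨0, by omega⟩, ?_⟩
        have h1 := Finset.card_insert_le (⟨0, by omega⟩ : Fin n)
          ({c ⟨0, by omega⟩, c⁻¹ ⟨0, by omega⟩, c (g⁻¹ ⟨0, by omega⟩),
            g (c⁻¹ ⟨0, by omega⟩)} : Finset (Fin n))
        have h2 := Finset.card_insert_le (c (⟨0, by omega⟩ : Fin n))
          ({c⁻¹ ⟨0, by omega⟩, c (g⁻¹ ⟨0, by omega⟩), g (c⁻¹ ⟨0, by omega⟩)} : Finset (Fin n))
        have h3 := Finset.card_insert_le (c⁻¹ (⟨0, by omega⟩ : Fin n))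
          ({c (g⁻¹ ⟨0, by omega⟩), g (c⁻¹ ⟨0, by omega⟩)} : Finset (Fin n))
        have h4 := Finset.card_insert_le (c (g⁻¹ (⟨0, by omega⟩ : Fin n)))
          ({g (c⁻¹ ⟨0, by omega⟩)} : Finset (Fin n))
        have h5 : ({g (c⁻¹ (⟨0, by omega⟩ : Fin n))} : Finset (Fin n)).card = 1 :=
          Finset.card_singleton _
        omega
      · have hn5 : n = 5 := by omega
        subst hn5
        obtain ⟨p, hp⟩ := fin5_two_cycle c hsc hc1
        refine ⟨c p, ?_⟩
        have e1 : c (c p) = p := hp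
        have e2 : c⁻¹ (c p) = p := c.symm_apply_apply p
        rw [e1, e2, Finset.insert_idem]
        have h1 := Finset.card_insert_le (c p)
          ({p, c (g⁻¹ (c p)), g p} : Finset (Fin 5))
        have h2 := Finset.card_insert_le (p : Fin 5)
          ({c (g⁻¹ (c p)), g p} : Finset (Fin 5))
        have h3 := Finset.card_insert_le (c (g⁻¹ (c p)))
          ({g p} : Finset (Fin 5))
        have h4 : ({g p} : Finset (Fin 5)).card = 1 := Finset.card_singleton _
        omega
    obtain ⟨a, hacard⟩ := key
    have hb : ∃ b : Fin n,
        b ∉ (insert a {c a, c⁻¹ a, c (g⁻¹ a), g (c⁻¹ a)} : Finset (Fin n)) := by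
      by_contra hall
      push_neg at hall
      have : (insert a {c a, c⁻¹ a, c (g⁻¹ a), g (c⁻¹ a)} : Finset (Fin n)) =
          Finset.univ := Finset.eq_univ_of_forall hall
      rw [this, Finset.card_univ, Fintype.card_fin] at hacard
      omega
    obtain ⟨b, hbmem⟩ := hb
    simp only [Finset.mem_insert, Finset.mem_singleton, not_or] at hbmem
    obtain ⟨hb1, hb2, hb3, hb4, hb5⟩ := hbmem
    have hab : a ≠ b := fun h => hb1 h.symm
    set τ : Equiv.Perm (Fin n) := Equiv.swap a b with hτ
    refine ⟨g * c⁻¹ * τ, ?_, τ * c, ?_, ?_, ?_, ?_⟩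
    · rw [Equiv.Perm.mem_alternatingGroup, map_mul, map_mul, map_inv, hg, hsc, hτ,
        Equiv.Perm.sign_swap hab]
      decide
    · rw [Equiv.Perm.mem_alternatingGroup, map_mul, hsc, hτ, Equiv.Perm.sign_swap hab]
      decide
    · -- d₁ = g * c⁻¹ * τ is a derangement
      intro x h
      rw [Equiv.Perm.mul_apply, Equiv.Perm.mul_apply] at h
      by_cases hxa : x = a
      · subst hxa
        rw [hτ, Equiv.swap_apply_left] at h
        apply hb4
        have : c⁻¹ b = g⁻¹ x := by
          rw [← h]; simp
        rw [← h]
        rw [show g⁻¹ (g (c⁻¹ b)) = c⁻¹ b by simp]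
        simp
      · by_cases hxb : x = b
        · subst hxb
          rw [hτ, Equiv.swap_apply_right] at h
          exact hb5 h.symm
        · rw [hτ, Equiv.swap_apply_of_ne_of_ne hxa hxb] at h
          exact hd1 x (by rw [Equiv.Perm.mul_apply]; exact h)
    · -- d₂ = τ * c is a derangement
      intro x h
      rw [Equiv.Perm.mul_apply] at h
      by_cases hca : c x = a
      · rw [hca, hτ, Equiv.swap_apply_left] at h
        apply hb3
        rw [h, ← hca]
        simp
      · by_cases hcb : c x = b
        · rw [hcb, hτ, Equiv.swap_apply_right] at h
          apply hb2
          rw [← hcb, ← h]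
        · rw [hτ, Equiv.swap_apply_of_ne_of_ne hca hcb] at h
          exact hc1 x h
    · rw [mul_assoc (g * c⁻¹) τ (τ * c), hτ, Equiv.swap_mul_self_mul,
        inv_mul_cancel_right]
end
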